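/- Let B be a real m×n matrix with QR-factorization B = QR, where Q is an m×n matrix with orthonormal columns (QᵀQ = I_n) and R is an upper triangular n×n matrix. Let c ∈ ℝ^m and γ > 0. Then σ_max([B, cγ]) ≤ max{σ_max(B), γ} · σ_max([Q, c]). -/

import Mathlib

/-- Euclidean norm of a vector in `ℝ^m`. -/
noncomputable def euclNorm {m : ℕ} (v : Fin m → ℝ) : ℝ :=
  Real.sqrt (∑ i, v i ^ 2)

/-- `σ_max(A) = sup {‖Ax‖₂ : ‖x‖₂ = 1}`. -/
noncomputable def sigmaMax {m n : ℕ} (A : Matrix (Fin m) (Fin n) ℝ) : ℝ :=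
  sSup {r : ℝ | ∃ x : Fin n → ℝ, euclNorm x = 1 ∧ r = euclNorm (A.mulVec x)}

/-- `σ_min(A) = inf {‖Ax‖₂ : ‖x‖₂ = 1}`. -/
noncomputable def sigmaMin {m n : ℕ} (A : Matrix (Fin m) (Fin n) ℝ) : ℝ :=
  sInf {r : ℝ | ∃ x : Fin n → ℝ, euclNorm x = 1 ∧ r = euclNorm (A.mulVec x)}

/-- Condition number `κ(A) = σ_max(A) / σ_min(A)`. -/
noncomputable def condNum {m n : ℕ} (A : Matrix (Fin m) (Fin n) ℝ) : ℝ :=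
  sigmaMax A / sigmaMin A

/-- `[B, b]`: the matrix `B` augmented with `b` as an additional last column. -/
def augment {m n : ℕ} (B : Matrix (Fin m) (Fin n) ℝ) (b : Fin m → ℝ) :
    Matrix (Fin m) (Fin (n + 1)) ℝ :=
  Matrix.of fun i => Fin.snoc (B i) (b i)

/-!
Write `[B, γc] = [Q, c] D` with `D = diag(R, γ)`. Since `Q` has orthonormal columns,
`‖R x‖ = ‖Q R x‖ = ‖B x‖`, so `D` stretches no vector by more than `max(σ_max(B), γ)`,
and the bound follows from submultiplicativity of `σ_max`.
-/

open Matrix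

lemma euclNorm_eq_norm {m : ℕ} (v : Fin m → ℝ) :
    euclNorm v = ‖(WithLp.toLp 2 v : EuclideanSpace ℝ (Fin m))‖ := by
  simp [euclNorm, EuclideanSpace.norm_eq]

lemma euclNorm_nonneg {m : ℕ} (v : Fin m → ℝ) : 0 ≤ euclNorm v :=
  Real.sqrt_nonneg _

lemma euclNorm_smul {m : ℕ} (a : ℝ) (v : Fin m → ℝ) :
    euclNorm (a • v) = |a| * euclNorm v := by
  simp only [euclNorm_eq_norm, WithLp.toLp_smul, norm_smul, Real.norm_eq_abs]

lemma euclNorm_eq_zero {m : ℕ} {v : Fin m → ℝ} : euclNorm v = 0 ↔ v = 0 := by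
  rw [euclNorm_eq_norm, norm_eq_zero, WithLp.toLp_eq_zero]

lemma euclNorm_sq {m : ℕ} (v : Fin m → ℝ) : euclNorm v ^ 2 = ∑ i, v i ^ 2 :=
  Real.sq_sqrt (by positivity)

lemma euclNorm_snoc_sq {n : ℕ} (v : Fin n → ℝ) (t : ℝ) :
    euclNorm (Fin.snoc v t : Fin (n + 1) → ℝ) ^ 2 = euclNorm v ^ 2 + t ^ 2 := by
  simp only [euclNorm_sq, Fin.sum_univ_castSucc, Fin.snoc_castSucc, Fin.snoc_last]

lemma euclNorm_mulVec_le_frobenius {m n : ℕ} (A : Matrix (Fin m) (Fin n) ℝ)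
    (x : Fin n → ℝ) :
    euclNorm (A *ᵥ x) ≤ Real.sqrt (∑ i, ∑ j, A i j ^ 2) * euclNorm x := by
  rw [euclNorm, euclNorm, ← Real.sqrt_mul (by positivity)]
  gcongr
  rw [Finset.sum_mul]
  gcongr with i
  simpa [mulVec, dotProduct, sq] using
    Finset.sum_mul_sq_le_sq_mul_sq Finset.univ (fun j => A i j) x

lemma bddAbove_euclNorm_mulVec_sphere {m n : ℕ} (A : Matrix (Fin m) (Fin n) ℝ) :
    BddAbove {r : ℝ | ∃ x : Fin n → ℝ, euclNorm x = 1 ∧ r = euclNorm (A *ᵥ x)} := by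
  refine ⟨Real.sqrt (∑ i, ∑ j, A i j ^ 2), ?_⟩
  rintro r ⟨x, hx, rfl⟩
  simpa [hx] using euclNorm_mulVec_le_frobenius A x

lemma sigmaMax_nonneg {m n : ℕ} (A : Matrix (Fin m) (Fin n) ℝ) : 0 ≤ sigmaMax A :=
  Real.sSup_nonneg fun _ ⟨_, _, hr⟩ => hr ▸ euclNorm_nonneg _

lemma euclNorm_mulVec_le_sigmaMax {m n : ℕ} (A : Matrix (Fin m) (Fin n) ℝ)
    (x : Fin n → ℝ) : euclNorm (A *ᵥ x) ≤ sigmaMax A * euclNorm x := by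
  rcases eq_or_ne x 0 with rfl | hx
  · simp [euclNorm]
  have hpos : 0 < euclNorm x :=
    (euclNorm_nonneg x).lt_of_ne (Ne.symm (euclNorm_eq_zero.not.mpr hx))
  have hunit : euclNorm ((euclNorm x)⁻¹ • x) = 1 := by
    rw [euclNorm_smul, abs_inv, abs_of_pos hpos, inv_mul_cancel₀ hpos.ne']
  have hle : (euclNorm x)⁻¹ * euclNorm (A *ᵥ x) ≤ sigmaMax A := by
    refine le_csSup (bddAbove_euclNorm_mulVec_sphere A) ⟨_, hunit, ?_⟩
    rw [mulVec_smul, euclNorm_smul, abs_inv, abs_of_pos hpos]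
  rwa [inv_mul_le_iff₀ hpos, mul_comm] at hle

lemma sigmaMax_le_mul_of_factor {m n k : ℕ} {A' : Matrix (Fin m) (Fin n) ℝ}
    {A : Matrix (Fin m) (Fin k) ℝ} {M : ℝ} (hM : 0 ≤ M)
    (h : ∀ x, ∃ z, A' *ᵥ x = A *ᵥ z ∧ euclNorm z ≤ M * euclNorm x) :
    sigmaMax A' ≤ M * sigmaMax A := by
  refine Real.sSup_le ?_ (mul_nonneg hM (sigmaMax_nonneg A))
  rintro r ⟨x, hx, rfl⟩
  obtain ⟨z, hxz, hz⟩ := h x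
  calc euclNorm (A' *ᵥ x) = euclNorm (A *ᵥ z) := by rw [hxz]
    _ ≤ sigmaMax A * euclNorm z := euclNorm_mulVec_le_sigmaMax A z
    _ ≤ sigmaMax A * M :=
        mul_le_mul_of_nonneg_left (by simpa [hx] using hz) (sigmaMax_nonneg A)
    _ = M * sigmaMax A := mul_comm _ _

lemma augment_mulVec {m n : ℕ} (A : Matrix (Fin m) (Fin n) ℝ) (b : Fin m → ℝ)
    (x : Fin (n + 1) → ℝ) :
    augment A b *ᵥ x = A *ᵥ Fin.init x + x (Fin.last n) • b := by
  ext i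
  simp [mulVec, dotProduct, augment, Fin.sum_univ_castSucc, Fin.init, mul_comm]

lemma augment_mul_smul_mulVec {m n k : ℕ} (Q : Matrix (Fin m) (Fin k) ℝ)
    (R : Matrix (Fin k) (Fin n) ℝ) (c : Fin m → ℝ) (γ : ℝ) (x : Fin (n + 1) → ℝ) :
    augment (Q * R) (γ • c) *ᵥ x =
      augment Q c *ᵥ Fin.snoc (R *ᵥ Fin.init x) (γ * x (Fin.last n)) := by
  rw [augment_mulVec, augment_mulVec, Fin.init_snoc, Fin.snoc_last, mulVec_mulVec,
    smul_smul, mul_comm]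

lemma euclNorm_mulVec_of_transpose_mul_self {m n : ℕ} {Q : Matrix (Fin m) (Fin n) ℝ}
    (hQ : Qᵀ * Q = 1) (w : Fin n → ℝ) : euclNorm (Q *ᵥ w) = euclNorm w := by
  have hdot : ∀ {k : ℕ} (v : Fin k → ℝ), ∑ i, v i ^ 2 = v ⬝ᵥ v := by
    intro k v; simp [dotProduct, sq]
  rw [euclNorm, euclNorm, hdot, hdot, dotProduct_mulVec, ← mulVec_transpose,
    mulVec_mulVec, hQ, one_mulVec]

lemma euclNorm_snoc_le_mul {n k : ℕ} {u : Fin n → ℝ} {v : Fin k → ℝ} {a t M : ℝ}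
    (hv : euclNorm v ≤ M * euclNorm u) (ha : |a| ≤ M) :
    euclNorm (Fin.snoc v (a * t) : Fin (k + 1) → ℝ) ≤
      M * euclNorm (Fin.snoc u t : Fin (n + 1) → ℝ) := by
  have hM : 0 ≤ M := (abs_nonneg a).trans ha
  refine (pow_le_pow_iff_left₀ (euclNorm_nonneg _)
    (mul_nonneg hM (euclNorm_nonneg _)) two_ne_zero).mp ?_
  have hv2 := pow_le_pow_left₀ (euclNorm_nonneg v) hv 2
  have ha2 := pow_le_pow_left₀ (abs_nonneg a) ha 2
  rw [sq_abs] at ha2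
  rw [mul_pow, euclNorm_snoc_sq, euclNorm_snoc_sq, mul_pow]
  nlinarith [sq_nonneg t]

theorem stmt_11_general {m n : ℕ} (B Q : Matrix (Fin m) (Fin n) ℝ)
    (R : Matrix (Fin n) (Fin n) ℝ) (hQR : B = Q * R)
    (hQ : Q.transpose * Q = 1)
    (c : Fin m → ℝ) (γ : ℝ) (hγ : 0 < γ) :
    sigmaMax (augment B (γ • c)) ≤
      max (sigmaMax B) γ * sigmaMax (augment Q c) := by
  set M := max (sigmaMax B) γ
  have hγM : |γ| ≤ M := (abs_of_pos hγ).le.trans (le_max_right _ _)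
  have hRM : ∀ u, euclNorm (R *ᵥ u) ≤ M * euclNorm u := fun u =>
    calc euclNorm (R *ᵥ u) = euclNorm (B *ᵥ u) := by
          rw [hQR, ← mulVec_mulVec, euclNorm_mulVec_of_transpose_mul_self hQ]
      _ ≤ sigmaMax B * euclNorm u := euclNorm_mulVec_le_sigmaMax B u
      _ ≤ M * euclNorm u := mul_le_mul_of_nonneg_right (le_max_left _ _) (euclNorm_nonneg u)
  refine sigmaMax_le_mul_of_factor ((abs_nonneg γ).trans hγM) fun x =>
    ⟨_, hQR ▸ augment_mul_smul_mulVec Q R c γ x, ?_⟩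
  simpa only [Fin.snoc_init_self] using
    euclNorm_snoc_le_mul (t := x (Fin.last n)) (hRM (Fin.init x)) hγM

theorem stmt_11 {m n : ℕ} (B Q : Matrix (Fin m) (Fin n) ℝ)
    (R : Matrix (Fin n) (Fin n) ℝ) (hQR : B = Q * R)
    (hQ : Q.transpose * Q = 1)
    (hR : ∀ i j : Fin n, j < i → R i j = 0)
    (c : Fin m → ℝ) (γ : ℝ) (hγ : 0 < γ) :
    sigmaMax (augment B (γ • c)) ≤
      max (sigmaMax B) γ * sigmaMax (augment Q c) :=
  stmt_11_general B Q R hQR hQ c γ hγ
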